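/- arXiv:2502.00258 — 2 statements merged into one kernel-verified Lean document; each statement's English description precedes it below -/
import Mathlib

section
/- Let W0 in R^d have all coordinates nonzero. Then Reg_{W0}(W) = 0 and Reg_{2:4}(W) = 0 (applied blockwise to each consecutive block of 4 coordinates, with d divisible by 4) if and only if every 4-block of W has at most 2 nonzero entries and every nonzero coordinate of W equals the corresponding coordinate of W0. -/
/-- The 2:4 mask-selection regularizer on `ℝ^4`. -/
noncomputable def Reg24 (w : Fin 4 → ℝ) : ℝ :=
  |w 0| * |w 1| * |w 2| + |w 1| * |w 2| * |w 3| +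
  |w 2| * |w 3| * |w 0| + |w 3| * |w 0| * |w 1|

/-! Each regularizer is a sum of nonnegative terms, so it vanishes iff every term does.
A term of `Reg_{W0}` vanishes iff `W i ∈ {0, W0 i}`; a term `|a| |b| |c|` of `Reg_{2:4}` vanishes
iff one of its three factors does, and every triple of a 4-block has a zero entry iff at most two
entries of the block are nonzero. -/

lemma sq_mul_sub_div_eq_zero_iff {x y : ℝ} (hy : y ≠ 0) :
    (x * (x - y) / y) ^ 2 = 0 ↔ (x ≠ 0 → x = y) := by
  rw [sq_eq_zero_iff, div_eq_zero_iff, mul_eq_zero, sub_eq_zero, or_iff_left hy, or_iff_not_imp_left]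

lemma reg24_nonneg (w : Fin 4 → ℝ) : 0 ≤ Reg24 w := by
  unfold Reg24
  positivity

lemma reg24_eq_zero_iff (w : Fin 4 → ℝ) :
    Reg24 w = 0 ↔ ((Finset.univ : Finset (Fin 4)).filter (fun i => w i ≠ 0)).card ≤ 2 := by
  have hterms : Reg24 w = 0 ↔ (w 0 = 0 ∨ w 1 = 0 ∨ w 2 = 0) ∧ (w 1 = 0 ∨ w 2 = 0 ∨ w 3 = 0) ∧
      (w 2 = 0 ∨ w 3 = 0 ∨ w 0 = 0) ∧ (w 3 = 0 ∨ w 0 = 0 ∨ w 1 = 0) := by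
    unfold Reg24
    simp (disch := positivity) only [add_eq_zero_iff_of_nonneg, mul_eq_zero, abs_eq_zero,
      or_assoc, and_assoc]
  rw [hterms, Finset.card_filter, Fin.sum_univ_four]
  by_cases h0 : w 0 = 0 <;> by_cases h1 : w 1 = 0 <;> by_cases h2 : w 2 = 0 <;>
    by_cases h3 : w 3 = 0 <;> simp [h0, h1, h2, h3]

/-- Both regularizers vanish iff every 4-block of `W` has at most 2 nonzero entries and
every nonzero coordinate of `W` equals the corresponding coordinate of `W0`.
Here `W, W0 : Fin n → Fin 4 → ℝ` encodes a vector in `ℝ^d` with `d = 4n` split into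
consecutive blocks of 4. -/
theorem both_regs_zero_iff (n : ℕ) (W W0 : Fin n → Fin 4 → ℝ)
    (hW0 : ∀ b i, W0 b i ≠ 0) :
    ((∑ b, ∑ i, (W b i * (W b i - W0 b i) / W0 b i) ^ 2) = 0 ∧
      (∑ b, Reg24 (W b)) = 0) ↔
    ((∀ b, ((Finset.univ : Finset (Fin 4)).filter (fun i => W b i ≠ 0)).card ≤ 2) ∧
      (∀ b i, W b i ≠ 0 → W b i = W0 b i)) := by
  have hsq : (∑ b, ∑ i, (W b i * (W b i - W0 b i) / W0 b i) ^ 2) = 0 ↔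
      ∀ b i, W b i ≠ 0 → W b i = W0 b i := by
    simp only [Finset.sum_eq_zero_iff_of_nonneg (fun _ _ => Finset.sum_nonneg fun _ _ => sq_nonneg _),
      Finset.sum_eq_zero_iff_of_nonneg (fun _ _ => sq_nonneg _), Finset.mem_univ, true_imp_iff,
      sq_mul_sub_div_eq_zero_iff (hW0 _ _)]
  have hreg : (∑ b, Reg24 (W b)) = 0 ↔
      ∀ b, ((Finset.univ : Finset (Fin 4)).filter (fun i => W b i ≠ 0)).card ≤ 2 := by
    simp only [Finset.sum_eq_zero_iff_of_nonneg (fun b _ => reg24_nonneg (W b)), Finset.mem_univ,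
      true_imp_iff, reg24_eq_zero_iff]
  rw [hsq, hreg, and_comm]
end

section
/- Let y in R^4 and let z = sorted(|y|) be the vector of absolute values of y sorted in descending order. Then for any w in R^4, the value (1/2)*||w - y||^2 + lambda*Reg_{2:4}(w) equals (1/2)*||w' - z||^2 + lambda*Reg_{2:4}(w'), where w' is obtained from w by taking absolute values adjusted for the signs of y and applying the same sorting permutation, provided sign(w_i) = sign(y_i) for all i with y_i ≠ 0. Consequently, the minimum of the proximal objective over R^4 equals the minimum of (1/2)*||v - z||^2 + lambda*Reg_{2:4}(v) over v in R^4 with nonnegative coordinates. -/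
open Finset

theorem Finset.sum_prod_erase_comp_perm {ι R : Type*} [Fintype ι] [DecidableEq ι]
    [CommSemiring R] (f : ι → R) (σ : Equiv.Perm ι) :
    ∑ i, ∏ j ∈ univ.erase i, f (σ j) = ∑ i, ∏ j ∈ univ.erase i, f j := by
  rw [← Equiv.sum_comp σ (fun i => ∏ j ∈ univ.erase i, f j)]
  refine sum_congr rfl fun i _ => ?_
  have : univ.erase (σ i) = (univ.erase i).map σ.toEmbedding := by
    rw [map_erase, map_univ_equiv]; rfl
  rw [this, prod_map]
  rfl

theorem Reg24_eq_sum_prod_erase (w : Fin 4 → ℝ) :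
    Reg24 w = ∑ i, ∏ j ∈ univ.erase i, |w j| := by
  simp only [Reg24, Fin.sum_univ_four]
  rw [show univ.erase (0 : Fin 4) = {1, 2, 3} by decide,
    show univ.erase (1 : Fin 4) = {0, 2, 3} by decide,
    show univ.erase (2 : Fin 4) = {0, 1, 3} by decide,
    show univ.erase (3 : Fin 4) = {0, 1, 2} by decide]
  simp
  ring

theorem Reg24_comp_perm (w : Fin 4 → ℝ) (σ : Equiv.Perm (Fin 4)) :
    Reg24 (w ∘ σ) = Reg24 w := by
  simp only [Reg24_eq_sum_prod_erase, Function.comp_apply]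
  exact sum_prod_erase_comp_perm (fun j => |w j|) σ

theorem Reg24_congr_abs {v w : Fin 4 → ℝ} (h : ∀ i, |v i| = |w i|) : Reg24 v = Reg24 w := by
  simp only [Reg24, h]

theorem Real.mul_nonneg_of_sign_eq {a b : ℝ} (h : Real.sign a = Real.sign b) : 0 ≤ a * b := by
  rcases lt_trichotomy a 0 with ha | rfl | ha <;> rcases lt_trichotomy b 0 with hb | rfl | hb <;>
    simp_all [Real.sign_of_neg, Real.sign_of_pos] <;> nlinarith

theorem sub_sq_eq_abs_sub_abs_sq_of_mul_nonneg {a b : ℝ} (h : 0 ≤ a * b) :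
    (a - b) ^ 2 = (|a| - |b|) ^ 2 := by
  rw [sub_sq, sub_sq, sq_abs, sq_abs, mul_assoc, mul_assoc, ← abs_mul, abs_of_nonneg h]

theorem abs_sub_abs_sq_le_sub_sq (a b : ℝ) : (|a| - |b|) ^ 2 ≤ (a - b) ^ 2 :=
  sq_le_sq.mpr (by simpa using abs_abs_sub_abs_le_abs_sub a b)

theorem Reg24_abs_comp_perm (w : Fin 4 → ℝ) (σ : Equiv.Perm (Fin 4)) :
    Reg24 (fun i => |w (σ i)|) = Reg24 w :=
  (Reg24_congr_abs (w := w ∘ σ) fun _ => abs_abs _).trans (Reg24_comp_perm w σ)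

noncomputable def proxObjective (lam : ℝ) (y w : Fin 4 → ℝ) : ℝ :=
  (1/2) * (∑ i, (w i - y i) ^ 2) + lam * Reg24 w

section SortedData

variable {lam : ℝ} {y z : Fin 4 → ℝ} {σ : Equiv.Perm (Fin 4)}

theorem proxObjective_abs_comp_perm_le (hz : ∀ i, z i = |y (σ i)|) (w : Fin 4 → ℝ) :
    proxObjective lam z (fun i => |w (σ i)|) ≤ proxObjective lam y w := by
  have hdist : ∑ i, (|w (σ i)| - z i) ^ 2 ≤ ∑ i, (w i - y i) ^ 2 := by
    rw [← Equiv.sum_comp σ fun i => (w i - y i) ^ 2]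
    exact sum_le_sum fun i _ => hz i ▸ abs_sub_abs_sq_le_sub_sq _ _
  simp only [proxObjective, Reg24_abs_comp_perm]
  linarith

theorem proxObjective_eq_abs_comp_perm (hz : ∀ i, z i = |y (σ i)|) {w : Fin 4 → ℝ}
    (hw : ∀ i, 0 ≤ w i * y i) :
    proxObjective lam y w = proxObjective lam z (fun i => |w (σ i)|) := by
  have hdist : ∑ i, (w i - y i) ^ 2 = ∑ i, (|w (σ i)| - z i) ^ 2 := by
    rw [← Equiv.sum_comp σ fun i => (w i - y i) ^ 2]
    exact sum_congr rfl fun i _ => hz i ▸ sub_sq_eq_abs_sub_abs_sq_of_mul_nonneg (hw (σ i))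
  simp only [proxObjective, Reg24_abs_comp_perm, hdist]

theorem exists_proxObjective_eq (hz : ∀ i, z i = |y (σ i)|) {v : Fin 4 → ℝ}
    (hv : ∀ i, 0 ≤ v i) : ∃ w, proxObjective lam y w = proxObjective lam z v := by
  set w : Fin 4 → ℝ := fun i => if y i < 0 then -v (σ.symm i) else v (σ.symm i)
  have hwy : ∀ i, 0 ≤ w i * y i := by
    intro i
    by_cases hy : y i < 0
    · simp only [w, if_pos hy]; nlinarith [hv (σ.symm i)]
    · simp only [w, if_neg hy]; nlinarith [hv (σ.symm i)]
  have hwv : (fun i => |w (σ i)|) = v := by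
    funext i
    simp only [w, Equiv.symm_apply_apply, apply_ite abs, abs_neg, ite_self, abs_of_nonneg (hv i)]
  exact ⟨w, hwv ▸ proxObjective_eq_abs_comp_perm hz hwy⟩

end SortedData

theorem prox_reduction_to_sorted_nonneg_general (y : Fin 4 → ℝ) (lam : ℝ)
    (σ : Equiv.Perm (Fin 4)) (z : Fin 4 → ℝ)
    (hz : ∀ i, z i = |y (σ i)|) :
    (∀ w : Fin 4 → ℝ, (∀ i, y i ≠ 0 → Real.sign (w i) = Real.sign (y i)) →
        (1/2) * (∑ i, (w i - y i) ^ 2) + lam * Reg24 w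
          = (1/2) * (∑ i, (|w (σ i)| - z i) ^ 2) + lam * Reg24 (fun i => |w (σ i)|)) ∧
    sInf (Set.range fun w : Fin 4 → ℝ => (1/2) * (∑ i, (w i - y i) ^ 2) + lam * Reg24 w)
      = sInf ((fun v : Fin 4 → ℝ => (1/2) * (∑ i, (v i - z i) ^ 2) + lam * Reg24 v) ''
          {v | ∀ i, 0 ≤ v i}) := by
  refine ⟨fun w hw => proxObjective_eq_abs_comp_perm hz fun i => ?_, ?_⟩
  · by_cases hy : y i = 0
    · simp [hy]
    · exact Real.mul_nonneg_of_sign_eq (hw i hy)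
  change sInf (Set.range (proxObjective lam y)) = sInf (proxObjective lam z '' {v | ∀ i, 0 ≤ v i})
  apply csInf_eq_csInf_of_forall_exists_le
  · rintro _ ⟨w, rfl⟩
    exact ⟨_, ⟨_, fun i => abs_nonneg _, rfl⟩, proxObjective_abs_comp_perm_le hz w⟩
  · rintro _ ⟨v, hv, rfl⟩
    obtain ⟨w, hw⟩ := exists_proxObjective_eq (lam := lam) hz hv
    exact ⟨_, ⟨w, rfl⟩, hw.le⟩

/-- Reduction of the proximal problem to sorted nonnegative data: with
`z = sorted(|y|)` (descending, obtained via the permutation `σ`), the objective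
at any `w` whose signs agree with those of `y` equals the objective at
`w' = (|w (σ ·)|)` for the data `z`; consequently the minimum over `ℝ^4`
equals the minimum of the `z`-objective over the nonnegative orthant. -/
theorem prox_reduction_to_sorted_nonneg (y : Fin 4 → ℝ) (lam : ℝ)
    (σ : Equiv.Perm (Fin 4)) (z : Fin 4 → ℝ)
    (hz : ∀ i, z i = |y (σ i)|)
    (hsorted : ∀ i j : Fin 4, i ≤ j → z j ≤ z i) :
    (∀ w : Fin 4 → ℝ, (∀ i, y i ≠ 0 → Real.sign (w i) = Real.sign (y i)) →
        (1/2) * (∑ i, (w i - y i) ^ 2) + lam * Reg24 w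
          = (1/2) * (∑ i, (|w (σ i)| - z i) ^ 2) + lam * Reg24 (fun i => |w (σ i)|)) ∧
    sInf (Set.range fun w : Fin 4 → ℝ => (1/2) * (∑ i, (w i - y i) ^ 2) + lam * Reg24 w)
      = sInf ((fun v : Fin 4 → ℝ => (1/2) * (∑ i, (v i - z i) ^ 2) + lam * Reg24 v) ''
          {v | ∀ i, 0 ≤ v i}) :=
  prox_reduction_to_sorted_nonneg_general y lam σ z hz
end
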